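/- Let s ∈ [−1,1]^n with L·s ≠ 0, let 0 < ε < 1/2, and let q ∈ ℝ^n satisfy ‖q − (I + L)^{−1} s‖_{I+L} ≤ δ·‖(I + L)^{−1} s‖_{I+L} for some δ with 0 < δ ≤ ε·‖L s‖₂/(12·√2·n³). Then (1 − ε)·‖L (I + L)^{−1} s‖₂² ≤ ‖L q‖₂² ≤ (1 + ε)·‖L (I + L)^{−1} s‖₂². -/

import Mathlib

/-!
The signed Laplacian `L` is positive semidefinite (an edge of sign `a` contributes
`|a| (vᵢ² + vⱼ²) - 2 a vᵢ vⱼ ≥ 0`), and by the Schur test `‖L‖ ≤ 2n`. For `x = (I + L)⁻¹ s`,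
`‖x‖²_{I+L} = ⟨x, s⟩ ≤ ‖x‖₂ ‖s‖₂ ≤ ‖x‖_{I+L} ‖s‖₂`, so `‖x‖_{I+L} ≤ ‖s‖₂ ≤ n` and
`‖L (q - x)‖₂ ≤ 2n ‖q - x‖_{I+L} ≤ 2n² δ`. Since `L s = L x + L² x`, `‖L s‖₂ ≤ 3n ‖L x‖₂`, and the
choice of `δ` gives `2√2 ‖L (q - x)‖₂ ≤ ε ‖L x‖₂`; squaring the triangle inequality
`|‖L q‖₂ - ‖L x‖₂| ≤ ‖L (q - x)‖₂` yields both bounds.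
-/

open Matrix

/-- The norm of a vector `x` with respect to a matrix `K`: `‖x‖_K = √(xᵀ K x)`. -/
noncomputable def matNorm {m : Type*} [Fintype m] (K : Matrix m m ℝ) (x : m → ℝ) : ℝ :=
  Real.sqrt (x ⬝ᵥ K *ᵥ x)

open WithLp Finset

section EuclideanNorm

variable {ι : Type*} [Fintype ι]

lemma sum_sq_eq_norm_toLp_sq (v : ι → ℝ) : ∑ i, v i ^ 2 = ‖toLp 2 v‖ ^ 2 := by
  simp [EuclideanSpace.norm_sq_eq]

lemma dotProduct_le_norm_toLp_mul_norm_toLp (u v : ι → ℝ) :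
    u ⬝ᵥ v ≤ ‖toLp 2 u‖ * ‖toLp 2 v‖ := by
  simpa [EuclideanSpace.inner_eq_star_dotProduct, dotProduct_comm] using
    real_inner_le_norm (toLp 2 u) (toLp 2 v)

lemma norm_toLp_le_sqrt_card {s : ι → ℝ} (hs : ∀ i, s i ∈ Set.Icc (-1 : ℝ) 1) :
    ‖toLp 2 s‖ ≤ √(Fintype.card ι) := by
  rw [Real.le_sqrt (norm_nonneg _) (Nat.cast_nonneg _), ← sum_sq_eq_norm_toLp_sq]
  calc ∑ i, s i ^ 2 ≤ ∑ _i : ι, (1 : ℝ) :=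
        sum_le_sum fun i _ => by nlinarith [(hs i).1, (hs i).2]
    _ = Fintype.card ι := by simp

/-- Schur test. -/
theorem norm_toLp_mulVec_sq_le {κ : Type*} [Fintype κ] (M : Matrix ι κ ℝ) {r c : ℝ}
    (hr : ∀ i, ∑ j, |M i j| ≤ r) (hc : ∀ j, ∑ i, |M i j| ≤ c) (hr₀ : 0 ≤ r) (v : κ → ℝ) :
    ‖toLp 2 (M *ᵥ v)‖ ^ 2 ≤ r * c * ‖toLp 2 v‖ ^ 2 := by
  rw [← sum_sq_eq_norm_toLp_sq, ← sum_sq_eq_norm_toLp_sq]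
  have hrow : ∀ i, (M *ᵥ v) i ^ 2 ≤ r * ∑ j, |M i j| * v j ^ 2 := fun i =>
    calc (∑ j, M i j * v j) ^ 2 ≤ (∑ j, |M i j|) * ∑ j, |M i j| * v j ^ 2 :=
          sum_sq_le_sum_mul_sum_of_sq_le_mul _ (fun _ _ => abs_nonneg _)
            (fun _ _ => by positivity) (fun j _ => by rw [mul_pow, ← sq_abs (M i j)]; nlinarith)
      _ ≤ r * ∑ j, |M i j| * v j ^ 2 :=
          mul_le_mul_of_nonneg_right (hr i) (sum_nonneg fun _ _ => by positivity)
  calc ∑ i, (M *ᵥ v) i ^ 2 ≤ ∑ i, r * ∑ j, |M i j| * v j ^ 2 := sum_le_sum fun i _ => hrow i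
    _ = r * ∑ j, (∑ i, |M i j|) * v j ^ 2 := by
        rw [← mul_sum, sum_comm]; simp only [sum_mul]
    _ ≤ r * ∑ j, c * v j ^ 2 := by gcongr with j; exact hc j
    _ = r * c * ∑ j, v j ^ 2 := by rw [← mul_sum, mul_assoc]

end EuclideanNorm

section SignedLaplacian

variable {ι : Type*} [Fintype ι]

lemma sum_abs_le_card {A : Matrix ι ι ℝ} (hA : ∀ i j, |A i j| ≤ 1) (i : ι) :
    ∑ j, |A i j| ≤ Fintype.card ι :=
  calc ∑ j, |A i j| ≤ ∑ _j : ι, (1 : ℝ) := sum_le_sum fun j _ => hA i j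
    _ = Fintype.card ι := by simp

variable [DecidableEq ι]

def signedLaplacian (A : Matrix ι ι ℝ) : Matrix ι ι ℝ :=
  diagonal (fun i => ∑ j, |A i j|) - A

lemma dotProduct_signedLaplacian_mulVec (A : Matrix ι ι ℝ) (v : ι → ℝ) :
    v ⬝ᵥ signedLaplacian A *ᵥ v = ∑ i, ∑ j, (|A i j| * v i ^ 2 - A i j * (v i * v j)) := by
  rw [signedLaplacian, sub_mulVec, dotProduct_sub]
  simp only [dotProduct, mulVec_diagonal]
  simp only [mulVec, dotProduct, mul_sum, sum_mul, ← sum_sub_distrib]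
  exact sum_congr rfl fun i _ => sum_congr rfl fun j _ => by ring

lemma isSymm_signedLaplacian {A : Matrix ι ι ℝ} (hA : A.IsSymm) : (signedLaplacian A).IsSymm :=
  (isSymm_diagonal _).sub hA

theorem posSemidef_signedLaplacian {A : Matrix ι ι ℝ} (hA : A.IsSymm) :
    (signedLaplacian A).PosSemidef := by
  refine .of_dotProduct_mulVec_nonneg ?_ fun v => ?_
  · rw [IsHermitian, conjTranspose_eq_transpose_of_trivial]
    exact (isSymm_signedLaplacian hA).eq
  set f : ι → ι → ℝ := fun i j => |A i j| * v i ^ 2 - A i j * (v i * v j)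
  have hpair : ∀ i j, 0 ≤ f i j + f j i := fun i j => by
    have hji : A j i = A i j := hA.apply i j
    simp only [f, hji]
    rcases abs_cases (A i j) with ⟨h, -⟩ | ⟨h, -⟩ <;> rw [h] <;>
      nlinarith [abs_nonneg (A i j), sq_nonneg (v i - v j), sq_nonneg (v i + v j)]
  have hswap : ∑ i, ∑ j, f i j = ∑ i, ∑ j, f j i := sum_comm
  have : 0 ≤ ∑ i, ∑ j, (f i j + f j i) :=
    sum_nonneg fun i _ => sum_nonneg fun j _ => hpair i j
  simp only [sum_add_distrib] at this
  rw [star_trivial, dotProduct_signedLaplacian_mulVec]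
  linarith

lemma sum_abs_signedLaplacian_le (A : Matrix ι ι ℝ) (i : ι) :
    ∑ j, |signedLaplacian A i j| ≤ 2 * ∑ j, |A i j| :=
  calc ∑ j, |signedLaplacian A i j|
      ≤ ∑ j, (|diagonal (fun i => ∑ j, |A i j|) i j| + |A i j|) :=
        sum_le_sum fun j _ => abs_sub _ _
    _ = 2 * ∑ j, |A i j| := by
        simp only [sum_add_distrib, diagonal_apply, apply_ite (abs : ℝ → ℝ), abs_zero,
          sum_ite_eq, mem_univ, if_true, abs_of_nonneg (sum_nonneg fun j _ => abs_nonneg (A i j))]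
        ring

theorem norm_toLp_signedLaplacian_mulVec_le {A : Matrix ι ι ℝ} (hA : A.IsSymm)
    (hA₁ : ∀ i j, |A i j| ≤ 1) (v : ι → ℝ) :
    ‖toLp 2 (signedLaplacian A *ᵥ v)‖ ≤ 2 * Fintype.card ι * ‖toLp 2 v‖ := by
  have hrow : ∀ i, ∑ j, |signedLaplacian A i j| ≤ 2 * Fintype.card ι := fun i =>
    (sum_abs_signedLaplacian_le A i).trans (by linarith [sum_abs_le_card hA₁ i])
  have hcol : ∀ j, ∑ i, |signedLaplacian A i j| ≤ 2 * Fintype.card ι := fun j => by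
    simpa only [(isSymm_signedLaplacian hA).apply] using hrow j
  have hsq := norm_toLp_mulVec_sq_le _ hrow hcol (by positivity) v
  exact (pow_le_pow_iff_left₀ (norm_nonneg _) (by positivity) two_ne_zero).mp
    (hsq.trans_eq (by ring))

end SignedLaplacian

section ShiftedQuadraticForm

variable {ι : Type*} [Fintype ι] [DecidableEq ι] {K : Matrix ι ι ℝ}

lemma norm_toLp_le_matNorm_one_add (hK : K.PosSemidef) (w : ι → ℝ) :
    ‖toLp 2 w‖ ≤ matNorm (1 + K) w := by
  have hquad : w ⬝ᵥ (1 + K) *ᵥ w = ‖toLp 2 w‖ ^ 2 + w ⬝ᵥ K *ᵥ w := by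
    rw [add_mulVec, one_mulVec, dotProduct_add, ← sum_sq_eq_norm_toLp_sq]
    simp only [dotProduct, sq]
  have hK_nonneg : 0 ≤ w ⬝ᵥ K *ᵥ w := by simpa using hK.dotProduct_mulVec_nonneg w
  rw [matNorm, hquad, Real.le_sqrt (norm_nonneg _) (add_nonneg (sq_nonneg _) hK_nonneg)]
  linarith

lemma one_add_mulVec_inv_mulVec (hK : K.PosSemidef) (s : ι → ℝ) :
    (1 + K) *ᵥ ((1 + K)⁻¹ *ᵥ s) = s := by
  have hdet : IsUnit (1 + K).det :=
    (isUnit_iff_isUnit_det _).mp (PosDef.one.add_posSemidef hK).isUnit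
  rw [mulVec_mulVec, mul_nonsing_inv _ hdet, one_mulVec]

lemma matNorm_one_add_inv_mulVec_le (hK : K.PosSemidef) (s : ι → ℝ) :
    matNorm (1 + K) ((1 + K)⁻¹ *ᵥ s) ≤ ‖toLp 2 s‖ := by
  set x := (1 + K)⁻¹ *ᵥ s
  have hx_nonneg : 0 ≤ x ⬝ᵥ (1 + K) *ᵥ x := by
    simpa using (PosSemidef.one.add hK).dotProduct_mulVec_nonneg x
  have hquad : matNorm (1 + K) x ^ 2 ≤ matNorm (1 + K) x * ‖toLp 2 s‖ :=
    calc matNorm (1 + K) x ^ 2 = x ⬝ᵥ s := by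
          rw [matNorm, Real.sq_sqrt hx_nonneg, one_add_mulVec_inv_mulVec hK]
      _ ≤ ‖toLp 2 x‖ * ‖toLp 2 s‖ := dotProduct_le_norm_toLp_mul_norm_toLp x s
      _ ≤ matNorm (1 + K) x * ‖toLp 2 s‖ :=
          mul_le_mul_of_nonneg_right (norm_toLp_le_matNorm_one_add hK x) (norm_nonneg _)
  nlinarith [Real.sqrt_nonneg (x ⬝ᵥ (1 + K) *ᵥ x), norm_nonneg (toLp 2 s)]

variable {C : ℝ}

lemma norm_toLp_mulVec_sub_inv_mulVec_le (hK : K.PosSemidef)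
    (hC : ∀ v, ‖toLp 2 (K *ᵥ v)‖ ≤ C * ‖toLp 2 v‖) (hC₀ : 0 ≤ C) {δ : ℝ}
    (hδ : 0 ≤ δ) {s q : ι → ℝ}
    (hq : matNorm (1 + K) (q - (1 + K)⁻¹ *ᵥ s) ≤ δ * matNorm (1 + K) ((1 + K)⁻¹ *ᵥ s)) :
    ‖toLp 2 (K *ᵥ (q - (1 + K)⁻¹ *ᵥ s))‖ ≤ C * (δ * ‖toLp 2 s‖) :=
  calc ‖toLp 2 (K *ᵥ (q - (1 + K)⁻¹ *ᵥ s))‖ ≤ C * ‖toLp 2 (q - (1 + K)⁻¹ *ᵥ s)‖ := hC _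
    _ ≤ C * matNorm (1 + K) (q - (1 + K)⁻¹ *ᵥ s) := by
        gcongr; exact norm_toLp_le_matNorm_one_add hK _
    _ ≤ C * (δ * matNorm (1 + K) ((1 + K)⁻¹ *ᵥ s)) := by gcongr
    _ ≤ C * (δ * ‖toLp 2 s‖) := by gcongr; exact matNorm_one_add_inv_mulVec_le hK s

lemma norm_toLp_mulVec_le_one_add_mul (hK : K.PosSemidef)
    (hC : ∀ v, ‖toLp 2 (K *ᵥ v)‖ ≤ C * ‖toLp 2 v‖) (s : ι → ℝ) :
    ‖toLp 2 (K *ᵥ s)‖ ≤ (1 + C) * ‖toLp 2 (K *ᵥ ((1 + K)⁻¹ *ᵥ s))‖ := by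
  set x := (1 + K)⁻¹ *ᵥ s
  have hsplit : K *ᵥ s = K *ᵥ x + K *ᵥ (K *ᵥ x) := by
    conv_lhs => rw [← one_add_mulVec_inv_mulVec hK s]
    rw [add_mulVec, one_mulVec, mulVec_add]
  calc ‖toLp 2 (K *ᵥ s)‖ ≤ ‖toLp 2 (K *ᵥ x)‖ + ‖toLp 2 (K *ᵥ (K *ᵥ x))‖ := by
        rw [hsplit, toLp_add]; exact norm_add_le _ _
    _ ≤ ‖toLp 2 (K *ᵥ x)‖ + C * ‖toLp 2 (K *ᵥ x)‖ := by gcongr; exact hC _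
    _ = (1 + C) * ‖toLp 2 (K *ᵥ x)‖ := by ring

end ShiftedQuadraticForm

lemma sq_bounds_of_abs_sub_le {a b t ε : ℝ} (ha : 0 ≤ a) (hε : 0 ≤ ε) (hε₁ : ε ≤ 1)
    (hab : |b - a| ≤ t) (ht : 2 * √2 * t ≤ ε * a) :
    (1 - ε) * a ^ 2 ≤ b ^ 2 ∧ b ^ 2 ≤ (1 + ε) * a ^ 2 := by
  have hsqrt2 : (1.4 : ℝ) ≤ √2 := by
    rw [Real.le_sqrt (by norm_num) (by norm_num)]; norm_num
  have ht' : 2.8 * t ≤ ε * a := by nlinarith [(abs_nonneg _).trans hab]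
  obtain ⟨hlow, hup⟩ := abs_sub_le_iff.mp hab
  constructor <;> nlinarith [mul_nonneg hε ha, mul_nonneg (mul_nonneg hε ha) ha]

theorem stmt_15_general (n : ℕ) (hn : 1 ≤ n) (A : Matrix (Fin n) (Fin n) ℝ)
    (hAsymm : A.IsSymm)
    (hAval : ∀ i j, A i j = -1 ∨ A i j = 0 ∨ A i j = 1)
    (D L : Matrix (Fin n) (Fin n) ℝ)
    (hD : D = Matrix.diagonal fun i => ∑ j, |A i j|)
    (hL : L = D - A)
    (s : Fin n → ℝ) (hs : ∀ i, s i ∈ Set.Icc (-1 : ℝ) 1)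
    (ε : ℝ) (hε : 0 < ε) (hε' : ε < 1 / 2)
    (δ : ℝ) (hδ : 0 < δ)
    (hδ' : δ ≤ ε * Real.sqrt (∑ i, ((L *ᵥ s) i) ^ 2) /
      (12 * Real.sqrt 2 * (n : ℝ) ^ 3))
    (q : Fin n → ℝ)
    (hq : matNorm (1 + L) (q - (1 + L)⁻¹ *ᵥ s) ≤
      δ * matNorm (1 + L) ((1 + L)⁻¹ *ᵥ s)) :
    (1 - ε) * ∑ i, ((L *ᵥ ((1 + L)⁻¹ *ᵥ s)) i) ^ 2 ≤ ∑ i, ((L *ᵥ q) i) ^ 2 ∧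
    ∑ i, ((L *ᵥ q) i) ^ 2 ≤ (1 + ε) * ∑ i, ((L *ᵥ ((1 + L)⁻¹ *ᵥ s)) i) ^ 2 := by
  obtain rfl : L = signedLaplacian A := by rw [hL, hD, signedLaplacian]
  have hK := posSemidef_signedLaplacian hAsymm
  have hLv : ∀ v, ‖toLp 2 (signedLaplacian A *ᵥ v)‖ ≤ 2 * n * ‖toLp 2 v‖ := by
    simpa using norm_toLp_signedLaplacian_mulVec_le hAsymm fun i j => by
      rcases hAval i j with h | h | h <;> simp [h]
  set L := signedLaplacian A
  set x := (1 + L)⁻¹ *ᵥ s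
  have hn' : (1 : ℝ) ≤ n := by exact_mod_cast hn
  have hs_le : ‖toLp 2 s‖ ≤ n := (norm_toLp_le_sqrt_card hs).trans <| by
    rw [Fintype.card_fin, Real.sqrt_le_self_iff]; exact .inr hn'
  have herr : ‖toLp 2 (L *ᵥ (q - x))‖ ≤ 2 * n * (δ * n) :=
    (norm_toLp_mulVec_sub_inv_mulVec_le hK hLv (by positivity) hδ.le hq).trans (by gcongr)
  have hLs : ‖toLp 2 (L *ᵥ s)‖ ≤ 3 * n * ‖toLp 2 (L *ᵥ x)‖ :=
    (norm_toLp_mulVec_le_one_add_mul hK hLv s).trans (by gcongr; linarith)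
  have hclose : |‖toLp 2 (L *ᵥ q)‖ - ‖toLp 2 (L *ᵥ x)‖| ≤ ‖toLp 2 (L *ᵥ (q - x))‖ := by
    rw [mulVec_sub, toLp_sub]; exact abs_norm_sub_norm_le _ _
  have hsmall : 2 * √2 * ‖toLp 2 (L *ᵥ (q - x))‖ ≤ ε * ‖toLp 2 (L *ᵥ x)‖ := by
    rw [sum_sq_eq_norm_toLp_sq, Real.sqrt_sq (norm_nonneg _), le_div_iff₀ (by positivity)] at hδ'
    refine le_of_mul_le_mul_left ?_ (by positivity : (0 : ℝ) < 3 * n)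
    calc 3 * n * (2 * √2 * ‖toLp 2 (L *ᵥ (q - x))‖) ≤ 3 * n * (2 * √2 * (2 * n * (δ * n))) := by
          gcongr
      _ = δ * (12 * √2 * n ^ 3) := by ring
      _ ≤ ε * ‖toLp 2 (L *ᵥ s)‖ := hδ'
      _ ≤ ε * (3 * n * ‖toLp 2 (L *ᵥ x)‖) := by gcongr
      _ = 3 * n * (ε * ‖toLp 2 (L *ᵥ x)‖) := by ring
  simp only [sum_sq_eq_norm_toLp_sq]
  exact sq_bounds_of_abs_sub_le (norm_nonneg _) hε.le (by linarith) hclose hsmall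

theorem stmt_15 (n : ℕ) (hn : 1 ≤ n) (A : Matrix (Fin n) (Fin n) ℝ)
    (hAsymm : A.IsSymm) (hAdiag : ∀ i, A i i = 0)
    (hAval : ∀ i j, A i j = -1 ∨ A i j = 0 ∨ A i j = 1)
    (D L : Matrix (Fin n) (Fin n) ℝ)
    (hD : D = Matrix.diagonal fun i => ∑ j, |A i j|)
    (hL : L = D - A)
    (s : Fin n → ℝ) (hs : ∀ i, s i ∈ Set.Icc (-1 : ℝ) 1)
    (hLs : L *ᵥ s ≠ 0)
    (ε : ℝ) (hε : 0 < ε) (hε' : ε < 1 / 2)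
    (δ : ℝ) (hδ : 0 < δ)
    (hδ' : δ ≤ ε * Real.sqrt (∑ i, ((L *ᵥ s) i) ^ 2) /
      (12 * Real.sqrt 2 * (n : ℝ) ^ 3))
    (q : Fin n → ℝ)
    (hq : matNorm (1 + L) (q - (1 + L)⁻¹ *ᵥ s) ≤
      δ * matNorm (1 + L) ((1 + L)⁻¹ *ᵥ s)) :
    (1 - ε) * ∑ i, ((L *ᵥ ((1 + L)⁻¹ *ᵥ s)) i) ^ 2 ≤ ∑ i, ((L *ᵥ q) i) ^ 2 ∧
    ∑ i, ((L *ᵥ q) i) ^ 2 ≤ (1 + ε) * ∑ i, ((L *ᵥ ((1 + L)⁻¹ *ᵥ s)) i) ^ 2 :=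
  stmt_15_general n hn A hAsymm hAval D L hD hL s hs ε hε hε' δ hδ hδ' q hq
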